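/- arXiv:1802.01630 — 2 statements merged into one kernel-verified Lean document; each statement's English description precedes it below -/
import Mathlib

section
/- Let K ≥ 2 and n ≥ 2 be integers, and let n₁,…,n_K be nonnegative integers with ∑_{l=1}^K n_l = n−1. Then ∏_{l=1}^K n_l! / (n_l + K − 1)! ≤ (2·3⋯(K−1))^{−(K−1)} · (n(n+1)⋯(n+K−2))^{−1}, i.e. the left-hand side is at most ((K−1)!)^{1−K} · ∏_{i=0}^{K−2}(n+i)^{−1}, and equality holds if and only if n_l = n−1 for some l (and the remaining n_m are zero). -/
open Finset

namespace Stmt2Aux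

/-- `f t m = (m+1)(m+2)⋯(m+t)`. -/
def f (t m : ℕ) : ℕ := ∏ i ∈ range t, (m + 1 + i)

lemma f_pos (t m : ℕ) : 0 < f t m := by
  apply Finset.prod_pos; intro i _; omega

lemma f_zero (t : ℕ) : f t 0 = Nat.factorial t := by
  induction t with
  | zero => simp [f]
  | succ t ih =>
      rw [f, prod_range_succ, ← f, ih, Nat.factorial_succ]; ring

lemma factorial_add (t m : ℕ) : Nat.factorial (m + t) = Nat.factorial m * f t m := by
  induction t with
  | zero => simp [f]
  | succ t ih =>
      rw [f, prod_range_succ, ← f, ← mul_assoc, ← ih, ← Nat.add_assoc,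
        Nat.factorial_succ]
      ring_nf

lemma key_le (t a b : ℕ) : f t 0 * f t (a + b) ≤ f t a * f t b := by
  rw [f, f, f, f, ← prod_mul_distrib, ← prod_mul_distrib]
  apply Finset.prod_le_prod'
  intro i _
  nlinarith [Nat.zero_le (a * b)]

lemma key_lt (t a b : ℕ) (ht : 1 ≤ t) (ha : a ≠ 0) (hb : b ≠ 0) :
    f t 0 * f t (a + b) < f t a * f t b := by
  rw [f, f, f, f, ← prod_mul_distrib, ← prod_mul_distrib]
  apply Finset.prod_lt_prod
  · intro i _; positivity
  · intro i _; nlinarith [Nat.zero_le (a * b)]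
  · refine ⟨0, Finset.mem_range.2 ht, ?_⟩
    have ha1 : 1 ≤ a := Nat.one_le_iff_ne_zero.2 ha
    have hb1 : 1 ≤ b := Nat.one_le_iff_ne_zero.2 hb
    nlinarith

lemma main_le {ι : Type*} (s : Finset ι) (hs : s.Nonempty) (t : ℕ) (m : ι → ℕ) :
    f t 0 ^ (s.card - 1) * f t (∑ l ∈ s, m l) ≤ ∏ l ∈ s, f t (m l) := by
  induction hs using Finset.Nonempty.cons_induction with
  | singleton a => simp
  | cons a s ha hs ih =>
      rw [Finset.sum_cons, Finset.prod_cons, Finset.card_cons]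
      have hcard : s.card + 1 - 1 = (s.card - 1) + 1 := by
        have := Finset.Nonempty.card_pos hs; omega
      calc f t 0 ^ (s.card + 1 - 1) * f t (m a + ∑ l ∈ s, m l)
          = f t 0 ^ (s.card - 1) * (f t 0 * f t (m a + ∑ l ∈ s, m l)) := by
            rw [hcard]; ring
        _ ≤ f t 0 ^ (s.card - 1) * (f t (m a) * f t (∑ l ∈ s, m l)) :=
            Nat.mul_le_mul_left _ (key_le t (m a) (∑ l ∈ s, m l))
        _ = f t (m a) * (f t 0 ^ (s.card - 1) * f t (∑ l ∈ s, m l)) := by ring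
        _ ≤ f t (m a) * ∏ l ∈ s, f t (m l) := Nat.mul_le_mul_left _ ih

lemma main_lt {ι : Type*} [DecidableEq ι] (s : Finset ι) (t : ℕ) (ht : 1 ≤ t)
    (m : ι → ℕ) (l1 l2 : ι) (h1 : l1 ∈ s) (h2 : l2 ∈ s) (hne : l2 ≠ l1)
    (hm1 : m l1 ≠ 0) (hm2 : m l2 ≠ 0) :
    f t 0 ^ (s.card - 1) * f t (∑ l ∈ s, m l) < ∏ l ∈ s, f t (m l) := by
  have h2' : l2 ∈ s.erase l1 := Finset.mem_erase.2 ⟨hne, h2⟩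
  have hne' : (s.erase l1).Nonempty := ⟨l2, h2'⟩
  have hsum : ∑ l ∈ s, m l = m l1 + ∑ l ∈ s.erase l1, m l :=
    (Finset.add_sum_erase s m h1).symm
  have hb : m l2 ≤ ∑ l ∈ s.erase l1, m l :=
    Finset.single_le_sum (fun i _ => Nat.zero_le _) h2'
  have hbne : (∑ l ∈ s.erase l1, m l) ≠ 0 := by omega
  have hcard : s.card - 1 = ((s.erase l1).card - 1) + 1 := by
    rw [Finset.card_erase_of_mem h1]
    have := Finset.Nonempty.card_pos hne'
    have h1' := Finset.card_erase_of_mem h1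
    omega
  calc f t 0 ^ (s.card - 1) * f t (∑ l ∈ s, m l)
      = f t 0 ^ ((s.erase l1).card - 1) *
          (f t 0 * f t (m l1 + ∑ l ∈ s.erase l1, m l)) := by
        rw [hcard, hsum]; ring
    _ < f t 0 ^ ((s.erase l1).card - 1) *
          (f t (m l1) * f t (∑ l ∈ s.erase l1, m l)) := by
        have := key_lt t (m l1) (∑ l ∈ s.erase l1, m l) ht hm1 hbne
        have hf0 := f_pos t 0
        have hpos : 0 < f t 0 ^ ((s.erase l1).card - 1) := by positivity
        exact mul_lt_mul_of_pos_left this hpos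
    _ = f t (m l1) * (f t 0 ^ ((s.erase l1).card - 1) *
          f t (∑ l ∈ s.erase l1, m l)) := by ring
    _ ≤ f t (m l1) * ∏ l ∈ s.erase l1, f t (m l) :=
        Nat.mul_le_mul_left _ (main_le _ hne' t m)
    _ = ∏ l ∈ s, f t (m l) := Finset.mul_prod_erase s (fun l => f t (m l)) h1

lemma main_eq {ι : Type*} [DecidableEq ι] (s : Finset ι) (t : ℕ) (m : ι → ℕ)
    (l : ι) (hl : l ∈ s) (h0 : ∀ l' ∈ s, l' ≠ l → m l' = 0) :
    ∏ l' ∈ s, f t (m l') = f t 0 ^ (s.card - 1) * f t (∑ l' ∈ s, m l') := by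
  have hsum : ∑ l' ∈ s, m l' = m l := Finset.sum_eq_single_of_mem l hl h0
  rw [hsum, ← Finset.mul_prod_erase s _ hl]
  have : ∏ l' ∈ s.erase l, f t (m l') = f t 0 ^ (s.card - 1) := by
    rw [Finset.prod_congr rfl (fun x hx => by
      rw [h0 x (Finset.mem_of_mem_erase hx) (Finset.ne_of_mem_erase hx)]),
      Finset.prod_const, Finset.card_erase_of_mem hl]
  rw [this]; ring

end Stmt2Aux

open Stmt2Aux in
/-- For nonnegative integers `n₁,…,n_K` with `∑ n_l = n - 1` (where `n ≥ 2`, `K ≥ 2`),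
`∏ n_l! / (n_l + K - 1)! ≤ ((K-1)!)^(1-K) · (n(n+1)⋯(n+K-2))⁻¹`,
with equality iff `n_l = n - 1` for some `l`. -/
theorem stmt2 (K n : ℕ) (hK : 2 ≤ K) (hn : 2 ≤ n)
    (m : Fin K → ℕ) (hm : ∑ l, m l = n - 1) :
    (∏ l, ((Nat.factorial (m l) : ℝ) / (Nat.factorial (m l + K - 1) : ℝ))) ≤
      ((Nat.factorial (K - 1) : ℝ)) ^ (1 - (K : ℤ)) *
        (∏ i ∈ Finset.range (K - 1), ((n + i : ℕ) : ℝ))⁻¹ ∧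
    ((∏ l, ((Nat.factorial (m l) : ℝ) / (Nat.factorial (m l + K - 1) : ℝ))) =
      ((Nat.factorial (K - 1) : ℝ)) ^ (1 - (K : ℤ)) *
        (∏ i ∈ Finset.range (K - 1), ((n + i : ℕ) : ℝ))⁻¹ ↔
      ∃ l, m l = n - 1) := by
  set t := K - 1 with ht_def
  have ht : 1 ≤ t := by omega
  -- rewrite LHS
  have hLHS : (∏ l, ((Nat.factorial (m l) : ℝ) / (Nat.factorial (m l + K - 1) : ℝ)))
      = ((∏ l, f t (m l) : ℕ) : ℝ)⁻¹ := by
    push_cast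
    rw [← Finset.prod_inv_distrib]
    apply Finset.prod_congr rfl
    intro l _
    have harg : m l + K - 1 = m l + t := by omega
    rw [harg, factorial_add]
    have h1 : (Nat.factorial (m l) : ℝ) ≠ 0 := by
      exact_mod_cast (Nat.factorial_pos _).ne'
    have h2 : (f t (m l) : ℝ) ≠ 0 := by exact_mod_cast (f_pos t (m l)).ne'
    push_cast
    field_simp
  -- rewrite RHS
  have hprodN : ∏ i ∈ Finset.range (K - 1), (n + i) = f t (n - 1) := by
    rw [f]
    apply Finset.prod_congr rfl
    intro i _
    omega
  have hprod : (∏ i ∈ Finset.range (K - 1), ((n + i : ℕ) : ℝ))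
      = ((f t (n - 1) : ℕ) : ℝ) := by
    rw [← Nat.cast_prod, hprodN]
  have hRHS : ((Nat.factorial (K - 1) : ℝ)) ^ (1 - (K : ℤ)) *
      (∏ i ∈ Finset.range (K - 1), ((n + i : ℕ) : ℝ))⁻¹
      = ((f t 0 ^ t * f t (n - 1) : ℕ) : ℝ)⁻¹ := by
    rw [hprod, f_zero]
    have hexp : (1 - (K : ℤ)) = -(t : ℤ) := by omega
    rw [hexp, zpow_neg, zpow_natCast]
    push_cast
    rw [mul_inv]
  rw [hLHS, hRHS]
  set N : ℕ := f t 0 ^ t * f t (n - 1) with hN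
  set P : ℕ := ∏ l, f t (m l) with hP
  have hNpos : 0 < N := by
    have := f_pos t 0; have := f_pos t (n - 1); positivity
  have hPpos : 0 < P := Finset.prod_pos (fun l _ => f_pos t (m l))
  have hcard : (Finset.univ : Finset (Fin K)).card - 1 = t := by
    simp [ht_def]
  -- main inequality N ≤ P
  have hle : N ≤ P := by
    haveI : Nonempty (Fin K) := ⟨⟨0, by omega⟩⟩
    have := main_le (Finset.univ : Finset (Fin K))
      Finset.univ_nonempty t m
    rwa [hcard, hm] at this
  constructor
  · apply inv_anti₀
    · exact_mod_cast hNpos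
    · exact_mod_cast hle
  · rw [inv_eq_iff_eq_inv, inv_inv, Nat.cast_inj]
    constructor
    · intro heq
      by_contra hno
      push_neg at hno
      -- find two distinct indices with nonzero values
      have hsum1 : 1 ≤ n - 1 := by omega
      have hex1 : ∃ l1, m l1 ≠ 0 := by
        by_contra h
        push_neg at h
        simp only [h, Finset.sum_const_zero] at hm
        omega
      obtain ⟨l1, hl1⟩ := hex1
      have hml1 : m l1 ≤ n - 1 := hm ▸ Finset.single_le_sum
        (fun i _ => Nat.zero_le _) (Finset.mem_univ l1)
      have hlt1 : m l1 < n - 1 := lt_of_le_of_ne hml1 (hno l1)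
      have hsum' : ∑ l ∈ Finset.univ.erase l1, m l = n - 1 - m l1 := by
        have := Finset.add_sum_erase Finset.univ m (Finset.mem_univ l1)
        omega
      have hex2 : ∃ l2 ∈ Finset.univ.erase l1, m l2 ≠ 0 := by
        by_contra h
        push_neg at h
        rw [Finset.sum_eq_zero h] at hsum'
        omega
      obtain ⟨l2, hl2mem, hl2⟩ := hex2
      have hlt := main_lt (Finset.univ : Finset (Fin K)) t ht m l1 l2
        (Finset.mem_univ l1) (Finset.mem_univ l2)
        (Finset.ne_of_mem_erase hl2mem) hl1 hl2
      rw [hcard, hm] at hlt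
      omega
    · rintro ⟨l, hl⟩
      have h0 : ∀ l' ∈ (Finset.univ : Finset (Fin K)), l' ≠ l → m l' = 0 := by
        intro l' _ hne
        have := Finset.add_sum_erase Finset.univ m (Finset.mem_univ l)
        have hle' : m l' ≤ ∑ x ∈ Finset.univ.erase l, m x :=
          Finset.single_le_sum (fun i _ => Nat.zero_le _)
            (Finset.mem_erase.2 ⟨hne, Finset.mem_univ l'⟩)
        omega
      have := main_eq (Finset.univ : Finset (Fin K)) t m l (Finset.mem_univ l) h0
      rw [hcard, hm] at this
      exact this
end

section
/- Let K ≥ 2, let ν > 0 be real, let n > 0 be real, and let m₁,…,m_K be nonnegative reals with ∑_{k=1}^K m_k = n. Then ∏_{k=1}^K Γ((ν + m_k)/2) ≤ Γ(ν/2)^{K−1} · Γ((ν + n)/2), with equality if and only if at most one of the m_k is nonzero (i.e. m_k = n for some k and the rest are zero). -/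
/-!
`L = log ∘ Γ` is strictly convex on `(0, ∞)`: `L s = L (s + 1) - log s`, where `L (· + 1)` is
convex by Bohr–Mollerup and `-log` is strictly convex. For a function `f` strictly convex on
`[a, ∞)` the increments `t ↦ f (a + t) - f a` are superadditive on `[0, ∞)`, strictly so on two
positive arguments. Summing the increments of `L` at `ν / 2` over the `m k / 2` and exponentiating
gives the inequality, and equality forces all but one `m k` to vanish.
-/

open Set

section Increments

variable {f : ℝ → ℝ} {a x y : ℝ}

lemma add_eq_div_smul_add_div_smul (hxy : x + y ≠ 0) :
    a + x = (y / (x + y)) • a + (x / (x + y)) • (a + (x + y)) := by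
  simp only [smul_eq_mul]
  field_simp
  ring

lemma div_add_div_add_eq_one (hxy : x + y ≠ 0) : y / (x + y) + x / (x + y) = 1 := by
  rw [← add_div, add_comm, div_self hxy]

theorem ConvexOn.map_add_le (hf : ConvexOn ℝ (Ici a) f) (hx : 0 ≤ x) (hy : 0 ≤ y)
    (hxy : 0 < x + y) : f (a + x) ≤ y / (x + y) * f a + x / (x + y) * f (a + (x + y)) := by
  rw [add_eq_div_smul_add_div_smul hxy.ne']
  exact hf.2 self_mem_Ici (by simp only [mem_Ici]; linarith) (by positivity) (by positivity)
    (div_add_div_add_eq_one hxy.ne')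

theorem StrictConvexOn.map_add_lt (hf : StrictConvexOn ℝ (Ici a) f) (hx : 0 < x) (hy : 0 < y) :
    f (a + x) < y / (x + y) * f a + x / (x + y) * f (a + (x + y)) := by
  have hxy : 0 < x + y := add_pos hx hy
  rw [add_eq_div_smul_add_div_smul hxy.ne']
  exact hf.2 self_mem_Ici (by simp only [mem_Ici]; linarith) (by linarith) (by positivity)
    (by positivity) (div_add_div_add_eq_one hxy.ne')

theorem ConvexOn.add_le_add_of_nonneg (hf : ConvexOn ℝ (Ici a) f) (hx : 0 ≤ x) (hy : 0 ≤ y) :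
    f (a + x) + f (a + y) ≤ f a + f (a + (x + y)) := by
  rcases (add_nonneg hx hy).eq_or_lt with hxy | hxy
  · obtain ⟨rfl, rfl⟩ : x = 0 ∧ y = 0 := ⟨by linarith, by linarith⟩
    simp
  have h₁ := hf.map_add_le hx hy hxy
  have h₂ := hf.map_add_le hy hx (by linarith)
  rw [add_comm y x] at h₂
  linear_combination h₁ + h₂ + (f a + f (a + (x + y))) * div_add_div_add_eq_one hxy.ne'

theorem StrictConvexOn.add_lt_add_of_pos (hf : StrictConvexOn ℝ (Ici a) f) (hx : 0 < x)
    (hy : 0 < y) : f (a + x) + f (a + y) < f a + f (a + (x + y)) := by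
  have h₁ := hf.map_add_lt hx hy
  have h₂ := hf.map_add_lt hy hx
  rw [add_comm y x] at h₂
  linear_combination h₁ + h₂ + (f a + f (a + (x + y))) * div_add_div_add_eq_one (add_pos hx hy).ne'

end Increments

section FinsetSum

variable {ι : Type*} {f : ℝ → ℝ} {a : ℝ} {s : Finset ι} {x : ι → ℝ}

theorem ConvexOn.sum_sub_le_sub (hf : ConvexOn ℝ (Ici a) f) (hx : ∀ k ∈ s, 0 ≤ x k) :
    ∑ k ∈ s, (f (a + x k) - f a) ≤ f (a + ∑ k ∈ s, x k) - f a := by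
  have h := Finset.le_sum_of_subadditive_on_pred (fun t => f a - f (a + t)) (0 ≤ ·)
    (by simp) (fun y z hy hz => by linarith [hf.add_le_add_of_nonneg hy hz])
    (fun _ _ => add_nonneg) x hx
  simp only [Finset.sum_sub_distrib] at h ⊢
  linarith

theorem StrictConvexOn.sum_sub_lt_sub (hf : StrictConvexOn ℝ (Ici a) f)
    (hx : ∀ k ∈ s, 0 ≤ x k) {i j : ι} (hi : i ∈ s) (hj : j ∈ s) (hij : i ≠ j) (hxi : 0 < x i)
    (hxj : 0 < x j) : ∑ k ∈ s, (f (a + x k) - f a) < f (a + ∑ k ∈ s, x k) - f a := by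
  classical
  have hx' : ∀ k ∈ s.erase i, 0 ≤ x k := fun k hk => hx k (Finset.mem_of_mem_erase hk)
  have hrest : 0 < ∑ k ∈ s.erase i, x k :=
    hxj.trans_le (Finset.single_le_sum hx' (Finset.mem_erase.2 ⟨hij.symm, hj⟩))
  rw [← Finset.add_sum_erase s _ hi, ← Finset.add_sum_erase s _ hi]
  calc _ ≤ (f (a + x i) - f a) + (f (a + ∑ k ∈ s.erase i, x k) - f a) :=
        add_le_add_right (hf.convexOn.sum_sub_le_sub hx') _
    _ < f (a + (x i + ∑ k ∈ s.erase i, x k)) - f a := by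
        linarith [hf.add_lt_add_of_pos hxi hrest]

theorem StrictConvexOn.sum_sub_eq_sub_iff (hf : StrictConvexOn ℝ (Ici a) f)
    (hx : ∀ k ∈ s, 0 ≤ x k) (hs : s.Nonempty) :
    ∑ k ∈ s, (f (a + x k) - f a) = f (a + ∑ k ∈ s, x k) - f a ↔
      ∃ k ∈ s, ∀ l ∈ s, l ≠ k → x l = 0 := by
  constructor
  · intro heq
    by_contra! h
    obtain ⟨k, hk⟩ := hs
    obtain ⟨i, hi, -, hxi⟩ := h k hk
    obtain ⟨j, hj, hji, hxj⟩ := h i hi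
    exact (hf.sum_sub_lt_sub hx hi hj hji.symm ((hx i hi).lt_of_ne' hxi)
      ((hx j hj).lt_of_ne' hxj)).ne heq
  · rintro ⟨k, hk, hzero⟩
    rw [Finset.sum_eq_single_of_mem k hk fun l hl hlk => by simp [hzero l hl hlk],
      Finset.sum_eq_single_of_mem k hk hzero]

end FinsetSum

namespace Real

theorem strictConvexOn_log_Gamma : StrictConvexOn ℝ (Ioi 0) (log ∘ Gamma) := by
  have hshift : ConvexOn ℝ (Ioi 0) fun s => log (Gamma (s + 1)) :=
    (convexOn_log_Gamma.translate_left 1).subset (fun s hs => by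
      simp only [mem_Ioi, preimage_const_add_Ioi, zero_sub] at hs ⊢; linarith)
      (convex_Ioi 0)
  refine (hshift.add_strictConvexOn strictConcaveOn_log_Ioi.neg).congr fun s hs => ?_
  have hs : 0 < s := hs
  simp [Gamma_add_one hs.ne', log_mul hs.ne' (Gamma_pos_of_pos hs).ne']

section Products

variable {ι : Type*} {a : ℝ} {s : Finset ι} {x : ι → ℝ}

lemma strictConvexOn_Ici_log_Gamma (ha : 0 < a) : StrictConvexOn ℝ (Ici a) (log ∘ Gamma) :=
  strictConvexOn_log_Gamma.subset (Ici_subset_Ioi.2 ha) (convex_Ici a)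

lemma prod_Gamma_add_pos (ha : 0 < a) (hx : ∀ k ∈ s, 0 ≤ x k) :
    0 < ∏ k ∈ s, Gamma (a + x k) :=
  Finset.prod_pos fun k hk => Gamma_pos_of_pos (by linarith [hx k hk])

lemma Gamma_pow_mul_Gamma_add_sum_pos (ha : 0 < a) (hx : ∀ k ∈ s, 0 ≤ x k) (N : ℕ) :
    0 < Gamma a ^ N * Gamma (a + ∑ k ∈ s, x k) :=
  mul_pos (pow_pos (Gamma_pos_of_pos ha) N)
    (Gamma_pos_of_pos (by linarith [Finset.sum_nonneg hx]))

lemma log_Gamma_pow_mul_sub_log_prod (ha : 0 < a) (hx : ∀ k ∈ s, 0 ≤ x k) (hs : s.Nonempty) :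
    log (Gamma a ^ (s.card - 1) * Gamma (a + ∑ k ∈ s, x k)) -
        log (∏ k ∈ s, Gamma (a + x k)) =
      (log (Gamma (a + ∑ k ∈ s, x k)) - log (Gamma a)) -
        ∑ k ∈ s, (log (Gamma (a + x k)) - log (Gamma a)) := by
  have hne : ∀ k ∈ s, Gamma (a + x k) ≠ 0 := fun k hk =>
    (Gamma_pos_of_pos (by linarith [hx k hk])).ne'
  have hsum : 0 < a + ∑ k ∈ s, x k := by linarith [Finset.sum_nonneg hx]
  rw [log_mul (pow_pos (Gamma_pos_of_pos ha) _).ne' (Gamma_pos_of_pos hsum).ne', log_pow, log_prod hne, Finset.sum_sub_distrib, Finset.sum_const, nsmul_eq_mul,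
    Nat.cast_sub hs.card_pos]
  ring

theorem prod_Gamma_add_le (ha : 0 < a) (hx : ∀ k ∈ s, 0 ≤ x k) (hs : s.Nonempty) :
    ∏ k ∈ s, Gamma (a + x k) ≤ Gamma a ^ (s.card - 1) * Gamma (a + ∑ k ∈ s, x k) := by
  rw [← log_le_log_iff (prod_Gamma_add_pos ha hx) (Gamma_pow_mul_Gamma_add_sum_pos ha hx _),
    ← sub_nonneg, log_Gamma_pow_mul_sub_log_prod ha hx hs, sub_nonneg]
  exact (strictConvexOn_Ici_log_Gamma ha).convexOn.sum_sub_le_sub hx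

theorem prod_Gamma_add_eq_iff (ha : 0 < a) (hx : ∀ k ∈ s, 0 ≤ x k) (hs : s.Nonempty) :
    ∏ k ∈ s, Gamma (a + x k) = Gamma a ^ (s.card - 1) * Gamma (a + ∑ k ∈ s, x k) ↔
      ∃ k ∈ s, ∀ l ∈ s, l ≠ k → x l = 0 := by
  rw [← log_injOn_pos.eq_iff (prod_Gamma_add_pos ha hx)
      (Gamma_pow_mul_Gamma_add_sum_pos ha hx _),
    eq_comm, ← sub_eq_zero, log_Gamma_pow_mul_sub_log_prod ha hx hs, sub_eq_zero, eq_comm]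
  exact (strictConvexOn_Ici_log_Gamma ha).sum_sub_eq_sub_iff hx hs

end Products

end Real

theorem stmt10_general (K : ℕ) (hK : 2 ≤ K) (ν : ℝ) (hν : 0 < ν) (n : ℝ)
    (m : Fin K → ℝ) (hm : ∀ k, 0 ≤ m k) (hsum : ∑ k, m k = n) :
    (∏ k, Real.Gamma ((ν + m k) / 2)) ≤
      Real.Gamma (ν / 2) ^ (K - 1) * Real.Gamma ((ν + n) / 2) ∧
    ((∏ k, Real.Gamma ((ν + m k) / 2)) =
        Real.Gamma (ν / 2) ^ (K - 1) * Real.Gamma ((ν + n) / 2) ↔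
      ∃ k, m k = n ∧ ∀ l, l ≠ k → m l = 0) := by
  have ha : 0 < ν / 2 := half_pos hν
  have hx : ∀ k ∈ Finset.univ, 0 ≤ m k / 2 := fun k _ => div_nonneg (hm k) zero_le_two
  have hne : (Finset.univ : Finset (Fin K)).Nonempty :=
    Finset.univ_nonempty_iff.2 ⟨⟨0, by omega⟩⟩
  have hle := Real.prod_Gamma_add_le ha hx hne
  have heq := Real.prod_Gamma_add_eq_iff ha hx hne
  rw [Finset.card_fin, ← Finset.sum_div, hsum] at hle heq
  simp only [add_div ν]
  refine ⟨hle, heq.trans ⟨?_, ?_⟩⟩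
  · rintro ⟨k, -, hk⟩
    have hzero : ∀ l, l ≠ k → m l = 0 := fun l hl => by linarith [hk l (Finset.mem_univ l) hl]
    refine ⟨k, ?_, hzero⟩
    rw [← hsum, Finset.sum_eq_single_of_mem k (Finset.mem_univ k) fun l _ => hzero l]
  · rintro ⟨k, -, hk⟩
    exact ⟨k, Finset.mem_univ k, fun l _ hl => by simp [hk l hl]⟩

/-- For `ν > 0` and nonnegative reals `m₁,…,m_K` with `∑ m_k = n > 0`,
`∏_k Γ((ν+m_k)/2) ≤ Γ(ν/2)^(K-1) Γ((ν+n)/2)`, with equality iff at most one `m_k` is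
nonzero. -/
theorem stmt10 (K : ℕ) (hK : 2 ≤ K) (ν : ℝ) (hν : 0 < ν) (n : ℝ) (hn : 0 < n)
    (m : Fin K → ℝ) (hm : ∀ k, 0 ≤ m k) (hsum : ∑ k, m k = n) :
    (∏ k, Real.Gamma ((ν + m k) / 2)) ≤
      Real.Gamma (ν / 2) ^ (K - 1) * Real.Gamma ((ν + n) / 2) ∧
    ((∏ k, Real.Gamma ((ν + m k) / 2)) =
        Real.Gamma (ν / 2) ^ (K - 1) * Real.Gamma ((ν + n) / 2) ↔
      ∃ k, m k = n ∧ ∀ l, l ≠ k → m l = 0) :=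
  stmt10_general K hK ν hν n m hm hsum
end
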